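/- Let d ≥ 4 be an integer and let f ∈ C[x,y,z] be given by f = x^{2m} + (xz + y^2)^m if d = 2m is even (m ≥ 2) and by f = x·(x^{2m} + (xz + y^2)^m) if d = 2m + 1 is odd (m ≥ 2). Then for every integer j with 1 ≤ j ≤ d − 3, every homogeneous Jacobian syzygy of f of degree j equals h·(0, x, −2y) for some homogeneous polynomial h of degree j − 1; that is, AR(f)_j = { (0, xh, −2yh) : h ∈ C[x,y,z] homogeneous of degree j − 1 }. -/

import Mathlib

/-!
Write `q = xz + y²` and `f = x^{2m} + q^m` or `x (x^{2m} + q^m)`. Then `f_y = 2y P` and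
`f_z = x P` with `P = m q^{m-1}` resp. `m x q^{m-1}`, so a syzygy `(a, b, c)` reads
`a f_x + P (2yb + xc) = 0`. Modulo `q^{m-1}`, `f_x` is a unit times a power of `x`, which is
coprime to `q`; hence `q^{m-1} ∣ a`. In the odd case `f_x ≡ q^m` modulo `x`, so also `x ∣ a`.
Since `deg a = j ≤ d - 3` is smaller than the degree of these divisors, `a = 0`, and then
`2yb + xc = 0` forces `b = xh`, `c = -2yh`.
-/

open MvPolynomial

/-- The Jacobian map sending a triple `(a,b,c)` to `a·f_x + b·f_y + c·f_z`. -/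
noncomputable def jacMap (f : MvPolynomial (Fin 3) ℂ) :
    (Fin 3 → MvPolynomial (Fin 3) ℂ) →ₗ[MvPolynomial (Fin 3) ℂ] MvPolynomial (Fin 3) ℂ where
  toFun v := ∑ i, v i * pderiv i f
  map_add' a b := by simp [add_mul, Finset.sum_add_distrib]
  map_smul' c a := by simp [Finset.mul_sum, mul_assoc]

/-- The module of Jacobian syzygies `AR(f)`. -/
noncomputable def AR (f : MvPolynomial (Fin 3) ℂ) :
    Submodule (MvPolynomial (Fin 3) ℂ) (Fin 3 → MvPolynomial (Fin 3) ℂ) :=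
  LinearMap.ker (jacMap f)

namespace MvPolynomial

theorem IsHomogeneous.eq_zero_of_dvd {σ R : Type*} [CommSemiring R] [NoZeroDivisors R]
    {a g : MvPolynomial σ R} {n : ℕ} (ha : a.IsHomogeneous n) (hg : g ∣ a)
    (hn : n < g.totalDegree) : a = 0 := by
  by_contra h
  exact (hn.trans_le ((totalDegree_le_of_dvd_of_isDomain hg h).trans ha.totalDegree_le)).false

theorem IsHomogeneous.of_X_mul {σ R : Type*} [CommSemiring R] {p : MvPolynomial σ R} {i : σ}
    {n : ℕ} (h : (X i * p).IsHomogeneous (n + 1)) : p.IsHomogeneous n := by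
  intro d hd
  have := h (d := Finsupp.single i 1 + d) (by rwa [coeff_X_mul])
  rw [map_add, Finsupp.weight_single, Pi.one_apply, smul_eq_mul, mul_one] at this
  omega

theorem isUnit_natCast {σ K : Type*} [Field K] [CharZero K] {n : ℕ} (hn : n ≠ 0) :
    IsUnit (n : MvPolynomial σ K) := by
  rw [← map_natCast (C : K →+* MvPolynomial σ K)]
  exact (isUnit_iff_ne_zero.mpr (Nat.cast_ne_zero.mpr hn)).map C

end MvPolynomial

variable (R : Type*) [CommSemiring R] in
noncomputable def conic : MvPolynomial (Fin 3) R := X 0 * X 2 + X 1 ^ 2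

section CommSemiring

variable {R : Type*} [CommSemiring R]

theorem isHomogeneous_conic : (conic R).IsHomogeneous 2 :=
  ((isHomogeneous_X R 0).mul (isHomogeneous_X R 2)).add ((isHomogeneous_X R 1).pow 2)

theorem pderiv_zero_conic : pderiv 0 (conic R) = X 2 := by
  simp [conic, pderiv_X]

theorem pderiv_one_conic : pderiv 1 (conic R) = 2 * X 1 := by
  simp [conic, pderiv_X]

theorem pderiv_two_conic : pderiv 2 (conic R) = X 0 := by
  simp [conic, pderiv_X]

end CommSemiring

section IsDomain

variable {R : Type*} [CommRing R] [IsDomain R]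

theorem not_X_zero_dvd_conic : ¬ X 0 ∣ conic R := fun h ↦ by
  have h1 : X 0 ∣ (X 1 : MvPolynomial (Fin 3) R) ^ 2 :=
    (dvd_add_right (dvd_mul_right _ _)).mp h
  exact absurd (X_dvd_X.mp (X_prime.dvd_of_dvd_pow h1)) (by decide)

theorem conic_ne_zero : conic R ≠ 0 := fun h ↦ not_X_zero_dvd_conic (h ▸ dvd_zero _)

theorem isRelPrime_X_zero_conic : IsRelPrime (X 0) (conic R) :=
  X_prime.irreducible.isRelPrime_iff_not_dvd.mpr not_X_zero_dvd_conic

theorem totalDegree_conic_pow (k : ℕ) : (conic R ^ k).totalDegree = 2 * k :=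
  (isHomogeneous_conic.pow k).totalDegree (pow_ne_zero k conic_ne_zero)

end IsDomain

theorem conic_pow_dvd_of_dvd_mul_X_zero_pow {K : Type*} [Field K] {a u : MvPolynomial (Fin 3) K}
    {k N : ℕ} (hu : IsUnit u) (h : conic K ^ k ∣ a * (u * X 0 ^ N)) : conic K ^ k ∣ a :=
  (hu.isRelPrime_right.mul_right isRelPrime_X_zero_conic.symm.pow).dvd_of_dvd_mul_right h

local notation "S" => MvPolynomial (Fin 3) ℂ

theorem exists_eq_X_zero_mul_of_syzygy {n : ℕ} {b c : S} (hb : b.IsHomogeneous (n + 1))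
    (h : 2 * X 1 * b + X 0 * c = 0) :
    ∃ g : S, g.IsHomogeneous n ∧ b = X 0 * g ∧ c = -(2 * X 1) * g := by
  have hX : IsRelPrime (X 0 : S) (2 * X 1) := by
    refine IsRelPrime.mul_right ?_ (X_prime.irreducible.isRelPrime_iff_not_dvd.mpr ?_)
    · simpa using (isUnit_natCast (σ := Fin 3) (K := ℂ) two_ne_zero).isRelPrime_right
    · rw [X_dvd_X]; decide
  obtain ⟨g, rfl⟩ : X 0 ∣ b := hX.dvd_of_dvd_mul_left ⟨-c, by linear_combination h⟩
  refine ⟨g, hb.of_X_mul, rfl, ?_⟩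
  have : X 0 * (c + 2 * X 1 * g) = 0 := by linear_combination h
  linear_combination (mul_eq_zero.mp this).resolve_left (X_ne_zero 0)

theorem mem_AR_and_isHomogeneous_iff {f P : S} {j : ℕ} (hj : 1 ≤ j) (hP : P ≠ 0)
    (h1 : pderiv 1 f = 2 * X 1 * P) (h2 : pderiv 2 f = X 0 * P)
    (hfirst : ∀ a w : S, a.IsHomogeneous j → a * pderiv 0 f + P * w = 0 → a = 0)
    (v : Fin 3 → S) :
    (v ∈ AR f ∧ ∀ i, (v i).IsHomogeneous j) ↔
      ∃ h : S, h.IsHomogeneous (j - 1) ∧ v 0 = 0 ∧ v 1 = X 0 * h ∧ v 2 = -(2 * X 1) * h := by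
  have hAR : v ∈ AR f ↔ v 0 * pderiv 0 f + P * (2 * X 1 * v 1 + X 0 * v 2) = 0 := by
    rw [AR, LinearMap.mem_ker, jacMap, LinearMap.coe_mk, AddHom.coe_mk, Fin.sum_univ_three, h1, h2]
    constructor <;> intro h <;> linear_combination h
  obtain ⟨n, rfl⟩ : ∃ n, j = n + 1 := ⟨j - 1, by omega⟩
  rw [hAR, Nat.add_sub_cancel]
  constructor
  · rintro ⟨hsyz, hhom⟩
    have h0 : v 0 = 0 := hfirst _ _ (hhom 0) hsyz
    rw [h0, zero_mul, zero_add, mul_eq_zero] at hsyz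
    obtain ⟨g, hg, hv1, hv2⟩ := exists_eq_X_zero_mul_of_syzygy (hhom 1) (hsyz.resolve_left hP)
    exact ⟨g, hg, h0, hv1, hv2⟩
  · rintro ⟨g, hg, h0, hv1, hv2⟩
    refine ⟨by rw [h0, hv1, hv2]; ring, fun i ↦ ?_⟩
    fin_cases i
    · simpa [h0] using isHomogeneous_zero _ _ _
    · simpa [hv1, add_comm] using (isHomogeneous_X ℂ 0).mul hg
    · change (v 2).IsHomogeneous (n + 1)
      rw [hv2, show -(2 * X 1) * g = C (-2 : ℂ) * (X 1 * g) by rw [map_neg, map_ofNat]; ring,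
        add_comm]
      exact ((isHomogeneous_X ℂ 1).mul hg).C_mul _

noncomputable def evenForm (m : ℕ) : S := X 0 ^ (2 * m) + conic ℂ ^ m

noncomputable def oddForm (m : ℕ) : S := X 0 * evenForm m

section PartialDerivatives

variable (k : ℕ)

theorem pderiv_zero_evenForm : pderiv 0 (evenForm (k + 1)) =
    ((2 * k + 2 : ℕ) : S) * X 0 ^ (2 * k + 1) + ((k + 1 : ℕ) : S) * conic ℂ ^ k * X 2 := by
  rw [evenForm, map_add, pderiv_pow, pderiv_pow, pderiv_zero_conic, pderiv_X_self]
  rw [show 2 * (k + 1) - 1 = 2 * k + 1 by omega, Nat.add_sub_cancel]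
  push_cast
  ring

theorem pderiv_one_evenForm :
    pderiv 1 (evenForm (k + 1)) = 2 * X 1 * (((k + 1 : ℕ) : S) * conic ℂ ^ k) := by
  rw [evenForm, map_add, pderiv_pow, pderiv_pow, pderiv_one_conic, pderiv_X_of_ne (by decide)]
  simp only [Nat.add_sub_cancel]
  ring

theorem pderiv_two_evenForm :
    pderiv 2 (evenForm (k + 1)) = X 0 * (((k + 1 : ℕ) : S) * conic ℂ ^ k) := by
  rw [evenForm, map_add, pderiv_pow, pderiv_pow, pderiv_two_conic, pderiv_X_of_ne (by decide)]
  simp only [Nat.add_sub_cancel]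
  ring

theorem pderiv_zero_oddForm : pderiv 0 (oddForm (k + 1)) =
    ((2 * k + 3 : ℕ) : S) * X 0 ^ (2 * k + 2) + conic ℂ ^ (k + 1)
      + ((k + 1 : ℕ) : S) * X 0 * X 2 * conic ℂ ^ k := by
  rw [oddForm, pderiv_mul, pderiv_zero_evenForm, pderiv_X_self, evenForm]
  push_cast
  ring

theorem pderiv_one_oddForm :
    pderiv 1 (oddForm (k + 1)) = 2 * X 1 * (X 0 * (((k + 1 : ℕ) : S) * conic ℂ ^ k)) := by
  rw [oddForm, pderiv_mul, pderiv_one_evenForm, pderiv_X_of_ne (by decide)]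
  ring

theorem pderiv_two_oddForm :
    pderiv 2 (oddForm (k + 1)) = X 0 * (X 0 * (((k + 1 : ℕ) : S) * conic ℂ ^ k)) := by
  rw [oddForm, pderiv_mul, pderiv_two_evenForm, pderiv_X_of_ne (by decide)]
  ring

end PartialDerivatives

theorem eq_zero_of_mul_pderiv_zero_evenForm {k j : ℕ} (hj : j < 2 * k) {a w : S}
    (ha : a.IsHomogeneous j)
    (h : a * pderiv 0 (evenForm (k + 1)) + ((k + 1 : ℕ) : S) * conic ℂ ^ k * w = 0) : a = 0 := by
  rw [pderiv_zero_evenForm] at h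
  have hconic : conic ℂ ^ k ∣ a * (((2 * k + 2 : ℕ) : S) * X 0 ^ (2 * k + 1)) :=
    ⟨-(((k + 1 : ℕ) : S) * (a * X 2 + w)), by linear_combination h⟩
  refine ha.eq_zero_of_dvd
    (conic_pow_dvd_of_dvd_mul_X_zero_pow (isUnit_natCast (by omega)) hconic) ?_
  rwa [totalDegree_conic_pow]

theorem eq_zero_of_mul_pderiv_zero_oddForm {k j : ℕ} (hj : j ≤ 2 * k) {a w : S}
    (ha : a.IsHomogeneous j)
    (h : a * pderiv 0 (oddForm (k + 1)) + X 0 * (((k + 1 : ℕ) : S) * conic ℂ ^ k) * w = 0) :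
    a = 0 := by
  rw [pderiv_zero_oddForm] at h
  have hconic : conic ℂ ^ k ∣ a * (((2 * k + 3 : ℕ) : S) * X 0 ^ (2 * k + 2)) :=
    ⟨-(a * conic ℂ + ((k + 1 : ℕ) : S) * X 0 * (a * X 2 + w)), by linear_combination h⟩
  have hX : X 0 ∣ a * conic ℂ ^ (k + 1) :=
    ⟨-(a * (((2 * k + 3 : ℕ) : S) * X 0 ^ (2 * k + 1) + ((k + 1 : ℕ) : S) * X 2 * conic ℂ ^ k)
        + ((k + 1 : ℕ) : S) * conic ℂ ^ k * w), by linear_combination h⟩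
  have hdvd : X 0 * conic ℂ ^ k ∣ a :=
    isRelPrime_X_zero_conic.pow_right.mul_dvd
      (isRelPrime_X_zero_conic.pow_right.dvd_of_dvd_mul_right hX)
      (conic_pow_dvd_of_dvd_mul_X_zero_pow (isUnit_natCast (by omega)) hconic)
  refine ha.eq_zero_of_dvd hdvd ?_
  rw [totalDegree_mul_of_isDomain (X_ne_zero 0) (pow_ne_zero _ conic_ne_zero), totalDegree_X,
    totalDegree_conic_pow]
  omega

theorem stmt8_general (d m : ℕ) (f : MvPolynomial (Fin 3) ℂ)
    (hf : (d = 2 * m ∧ 2 ≤ m ∧ f = X 0 ^ (2 * m) + (X 0 * X 2 + X 1 ^ 2) ^ m) ∨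
          (d = 2 * m + 1 ∧ 2 ≤ m ∧ f = X 0 * (X 0 ^ (2 * m) + (X 0 * X 2 + X 1 ^ 2) ^ m))) :
    ∀ j : ℕ, 1 ≤ j → j ≤ d - 3 → ∀ v : Fin 3 → MvPolynomial (Fin 3) ℂ,
      (v ∈ AR f ∧ ∀ i, (v i).IsHomogeneous j) ↔
        ∃ h : MvPolynomial (Fin 3) ℂ, h.IsHomogeneous (j - 1) ∧
          v 0 = 0 ∧ v 1 = X 0 * h ∧ v 2 = -(2 * X 1) * h := by
  intro j hj1 hj2 v
  rcases hf with ⟨rfl, -, rfl⟩ | ⟨rfl, -, rfl⟩ <;>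
    obtain ⟨k, rfl⟩ : ∃ k, m = k + 1 := ⟨m - 1, by omega⟩ <;>
    have hP : ((k + 1 : ℕ) : S) * conic ℂ ^ k ≠ 0 :=
      mul_ne_zero (isUnit_natCast k.succ_ne_zero).ne_zero (pow_ne_zero k conic_ne_zero)
  · exact mem_AR_and_isHomogeneous_iff hj1 hP (pderiv_one_evenForm k)
      (pderiv_two_evenForm k) (fun a w ha ↦ eq_zero_of_mul_pderiv_zero_evenForm (by omega) ha) v
  · exact mem_AR_and_isHomogeneous_iff hj1 (mul_ne_zero (X_ne_zero 0) hP)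
      (pderiv_one_oddForm k) (pderiv_two_oddForm k)
      (fun a w ha ↦ eq_zero_of_mul_pderiv_zero_oddForm (by omega) ha) v

theorem stmt8 (d m : ℕ) (f : MvPolynomial (Fin 3) ℂ) (hd : 4 ≤ d)
    (hf : (d = 2 * m ∧ 2 ≤ m ∧ f = X 0 ^ (2 * m) + (X 0 * X 2 + X 1 ^ 2) ^ m) ∨
          (d = 2 * m + 1 ∧ 2 ≤ m ∧ f = X 0 * (X 0 ^ (2 * m) + (X 0 * X 2 + X 1 ^ 2) ^ m))) :
    ∀ j : ℕ, 1 ≤ j → j ≤ d - 3 → ∀ v : Fin 3 → MvPolynomial (Fin 3) ℂ,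
      (v ∈ AR f ∧ ∀ i, (v i).IsHomogeneous j) ↔
        ∃ h : MvPolynomial (Fin 3) ℂ, h.IsHomogeneous (j - 1) ∧
          v 0 = 0 ∧ v 1 = X 0 * h ∧ v 2 = -(2 * X 1) * h :=
  stmt8_general d m f hf
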